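/- A nonzero torsion abelian group M is a co-Kasch Z-module if and only if pM ≠ M for each prime p with nonzero p-primary component T_p(M); and if M is a not-torsion abelian group, then M is co-Kasch if and only if pM ≠ M for every prime p. -/

import Mathlib

def IsCoKasch (R : Type*) [Ring R] (M : Type*) [AddCommGroup M] [Module R M] : Prop :=
  ∀ (K : Submodule R M) (S : Submodule R (M ⧸ K)), IsSimpleModule R S →
    ∃ f : M →ₗ[R] S, Function.Surjective f

/-!
Simple `ℤ`-modules are the groups `ZMod p`, `p` prime, so `M` is co-Kasch iff `M` maps onto
`ZMod p` for every prime `p` that is the order of an element of some quotient of `M`. A map of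
`M` onto `ZMod p` exists iff `p M ≠ M`, because `M / p M` is a vector space over `ZMod p`.
For torsion `M`, an element of order `p` in a quotient lifts to an element of `M` whose order is
divisible by `p`, so these primes are those with `T_p(M) ≠ 0`. If `x ∈ M` has infinite order,
the class of `x` in `M / ⟨p x⟩` has order `p` for every prime `p`.
-/

open Function

theorem exists_surjective_linearMap_of_ne_zero {K V : Type*} [Field K] [AddCommGroup V]
    [Module K V] {x : V} (hx : x ≠ 0) : ∃ f : V →ₗ[K] K, Surjective f := by
  obtain ⟨f, hf⟩ := Module.Projective.exists_dual_eq_one K hx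
  exact ⟨f, fun k => ⟨k • x, by simp [hf]⟩⟩

theorem exists_addOrderOf_eq_prime_iff {G : Type*} [AddGroup G] {p : ℕ} (hp : p.Prime) :
    (∃ m : G, addOrderOf m = p) ↔ ∃ m : G, m ≠ 0 ∧ ∃ n : ℕ, ((p : ℤ) ^ n) • m = 0 := by
  constructor
  · rintro ⟨m, rfl⟩
    refine ⟨m, fun h => hp.ne_one (by simp [h]), 1, ?_⟩
    rw [pow_one, natCast_zsmul, addOrderOf_nsmul_eq_zero]
  · rintro ⟨m, hm, n, hmn⟩
    rw [← Nat.cast_pow, natCast_zsmul] at hmn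
    obtain ⟨k, -, hord⟩ := (Nat.dvd_prime_pow hp).mp (addOrderOf_dvd_of_nsmul_eq_zero hmn)
    have hk : k ≠ 0 := by
      rintro rfl
      exact hm (AddMonoid.addOrderOf_eq_one_iff.mp hord)
    -- `addOrderOf_nsmul_addOrderOf_sub` is the additive form of `orderOf_pow_orderOf_div`
    exact ⟨_, addOrderOf_nsmul_addOrderOf_sub (by simp [hord, hp.ne_zero])
      (hord ▸ dvd_pow_self p hk)⟩

section AbelianGroups

variable {A M : Type*} [AddCommGroup A] [AddCommGroup M]

theorem isSimpleModule_int_iff_isSimpleAddGroup : IsSimpleModule ℤ A ↔ IsSimpleAddGroup A := by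
  rw [isSimpleModule_iff, ← AddSubgroup.toIntSubmodule.isSimpleOrder_iff]
  refine ⟨fun h => ?_, fun _ => inferInstance⟩
  have : Nontrivial A := AddSubgroup.nontrivial_iff.mp inferInstance
  exact ⟨fun H _ => h.eq_bot_or_eq_top H⟩

theorem exists_prime_zmod_addEquiv_of_isSimpleModule_int [IsSimpleModule ℤ A] :
    ∃ p : ℕ, p.Prime ∧ Nonempty (ZMod p ≃+ A) := by
  have := isSimpleModule_int_iff_isSimpleAddGroup.mp ‹_›
  have hp := IsSimpleAddGroup.prime_card (α := A)
  have := Fact.mk hp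
  exact ⟨_, hp, ⟨zmodAddCyclicAddEquiv (isAddCyclic_of_prime_card rfl)⟩⟩

theorem isSimpleModule_zmultiples_of_addOrderOf_prime {a : A} (hp : (addOrderOf a).Prime) :
    IsSimpleModule ℤ (AddSubgroup.zmultiples a).toIntSubmodule := by
  have := Fact.mk hp
  rw [isSimpleModule_int_iff_isSimpleAddGroup]
  exact isSimpleAddGroup_of_prime_card (Nat.card_zmultiples a)

theorem not_surjective_zsmul_of_surjective {N : Type*} [AddCommGroup N] [Nontrivial N] {n : ℤ}
    (hN : ∀ y : N, n • y = 0) {f : M →+ N} (hf : Surjective f) :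
    ¬ Surjective fun m : M => n • m := by
  intro hn
  obtain ⟨y, hy⟩ := exists_ne (0 : N)
  obtain ⟨m, rfl⟩ := hf y
  obtain ⟨m', rfl⟩ := hn m
  exact hy (by rw [map_zsmul, hN])

theorem exists_surjective_zmod_of_not_surjective_zsmul {p : ℕ} [Fact p.Prime]
    (h : ¬ Surjective fun m : M => (p : ℤ) • m) : ∃ f : M →+ ZMod p, Surjective f := by
  set H := (zsmulAddGroupHom (p : ℤ) : M →+ M).range
  have hH : ∀ x : M, p • x ∈ H := fun x => ⟨x, by simp⟩
  let _ : Module (ZMod p) (M ⧸ H) := QuotientAddGroup.zmodModule hH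
  obtain ⟨x, hx⟩ : ∃ x : M, x ∉ H := by
    simpa [Surjective, H] using h
  have hx' : (x : M ⧸ H) ≠ 0 := by rwa [Ne, QuotientAddGroup.eq_zero_iff]
  obtain ⟨g, hg⟩ := exists_surjective_linearMap_of_ne_zero (K := ZMod p) hx'
  exact ⟨g.toAddMonoidHom.comp (QuotientAddGroup.mk' H),
    hg.comp (QuotientAddGroup.mk'_surjective H)⟩

theorem isCoKasch_int_iff :
    IsCoKasch ℤ M ↔ ∀ p : ℕ, p.Prime → (∃ K : Submodule ℤ M, ∃ u : M ⧸ K, addOrderOf u = p) →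
      ¬ Surjective fun m : M => (p : ℤ) • m := by
  constructor
  · rintro hM p hp ⟨K, u, rfl⟩
    have hS := isSimpleModule_zmultiples_of_addOrderOf_prime hp
    have := hS.nontrivial
    obtain ⟨f, hf⟩ := hM K _ hS
    refine not_surjective_zsmul_of_surjective (fun y => ?_) (f := f.toAddMonoidHom) hf
    rw [natCast_zsmul, ← Nat.card_zmultiples u]
    exact card_nsmul_eq_zero'
  · intro h K S hS
    obtain ⟨p, hp, ⟨e⟩⟩ := exists_prime_zmod_addEquiv_of_isSimpleModule_int (A := S)
    have := Fact.mk hp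
    have hu : addOrderOf ((e 1 : S) : M ⧸ K) = p :=
      (addOrderOf_injective (S.subtype.toAddMonoidHom.comp e.toAddMonoidHom)
        (Subtype.val_injective.comp e.injective) 1).trans (ZMod.addOrderOf_one p)
    obtain ⟨g, hg⟩ := exists_surjective_zmod_of_not_surjective_zsmul (h p hp ⟨K, _, hu⟩)
    exact ⟨(e.toAddMonoidHom.comp g).toIntLinearMap, e.surjective.comp hg⟩

theorem exists_quotient_addOrderOf_eq_iff (hM : IsAddTorsion M) (n : ℕ) :
    (∃ K : Submodule ℤ M, ∃ u : M ⧸ K, addOrderOf u = n) ↔ ∃ m : M, addOrderOf m = n := by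
  constructor
  · rintro ⟨K, u, rfl⟩
    obtain ⟨x, rfl⟩ := K.mkQ_surjective u
    exact ⟨_, addOrderOf_nsmul_addOrderOf_sub (hM x).addOrderOf_pos.ne'
      (addOrderOf_map_dvd K.mkQ.toAddMonoidHom x)⟩
  · rintro ⟨m, rfl⟩
    refine ⟨⊥, _, addOrderOf_injective (⊥ : Submodule ℤ M).mkQ.toAddMonoidHom ?_ m⟩
    exact LinearMap.ker_eq_bot.mp (Submodule.ker_mkQ ⊥)

theorem addOrderOf_mk_span_zsmul {x : M} (hx : ¬ IsOfFinAddOrder x) {p : ℕ} (hp : p.Prime) :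
    addOrderOf (Submodule.Quotient.mk x : M ⧸ Submodule.span ℤ {(p : ℤ) • x}) = p := by
  have := Fact.mk hp
  refine addOrderOf_eq_prime ?_ ?_
  · rw [← natCast_zsmul, ← Submodule.Quotient.mk_smul, Submodule.Quotient.mk_eq_zero]
    exact Submodule.mem_span_singleton_self _
  · rw [Ne, Submodule.Quotient.mk_eq_zero, Submodule.mem_span_singleton]
    rintro ⟨a, ha⟩
    have hap : a * p = 1 := injective_zsmul_iff_not_isOfFinAddOrder.mpr hx <| by
      simp only [mul_zsmul, one_zsmul]
      exact ha
    exact hp.not_dvd_one (Int.natCast_dvd_natCast.mp ⟨a, by rw [Nat.cast_one, ← hap, mul_comm]⟩)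

end AbelianGroups

theorem stmt19 (M : Type) [AddCommGroup M] :
    (AddMonoid.IsTorsion M → Nontrivial M →
      (IsCoKasch ℤ M ↔ ∀ p : ℕ, p.Prime →
        (∃ m : M, m ≠ 0 ∧ ∃ n : ℕ, ((p : ℤ) ^ n) • m = 0) →
        ¬ Function.Surjective (fun m : M => (p : ℤ) • m))) ∧
    (¬ AddMonoid.IsTorsion M →
      (IsCoKasch ℤ M ↔ ∀ p : ℕ, p.Prime →
        ¬ Function.Surjective (fun m : M => (p : ℤ) • m))) := by
  refine ⟨fun hM _ => ?_, fun hM => ?_⟩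
  · rw [isCoKasch_int_iff]
    refine forall₂_congr fun p hp => imp_congr_left ?_
    rw [exists_quotient_addOrderOf_eq_iff hM, exists_addOrderOf_eq_prime_iff hp]
  · obtain ⟨x, hx⟩ := not_forall.mp hM
    rw [isCoKasch_int_iff]
    exact forall₂_congr fun p hp => forall_prop_of_true ⟨_, _, addOrderOf_mk_span_zsmul hx hp⟩
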